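/- Let μ, ν ∈ ℂ, c ≠ 0, m, r, s ∈ ℤ^N, g ∈ ġ, 1 ≤ a, b ≤ N. In the g(μ,ν)-module V_g(c) the following identities hold: (t₀t^s k₀)·Σ_{p=1}^N r_p E^m_{pa} = 0; (t₀t^s k_b)·Σ_{p=1}^N r_p E^m_{pa} = 0; (t₀t^s⊗g)·Σ_{p=1}^N r_p E^m_{pa} = 0; (t₀t^s d̃₀)·Σ_{p=1}^N r_p E^m_{pa} = r_a(−1 + 2νc) q^{m+s}; (t₀t^s d̃_b)·Σ_{p=1}^N r_p E^m_{pa} = (r_b m_a + (1 − μc) s_a r_b − νc r_a s_b) q^{m+s}. -/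

import Mathlib

namespace ToroidalPaper

noncomputable section

/-- multi-indices r ∈ ℤ^{N+1} -/
abbrev Idx (N : ℕ) := Fin (N + 1) → ℤ

/-- The model for the 1-forms Ω¹_R: the free module on k₀,…,k_N over R,
written in the monomial basis t^r k_p. -/
abbrev OmegaR (N : ℕ) := Idx N →₀ (Fin (N + 1) → ℂ)

/-- The subspace d(R) ⊆ Ω¹_R of exact forms: d(t^r) = Σ_p r_p t^r k_p. -/
def dR (N : ℕ) : Submodule ℂ (OmegaR N) :=
  Submodule.span ℂ {w : OmegaR N | ∃ r : Idx N, w = Finsupp.single r fun p => (r p : ℂ)}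

/-- K = Ω¹_R / d(R) -/
abbrev Kmod (N : ℕ) := OmegaR N ⧸ dR N

variable (N : ℕ) (g : Type) [LieRing g] [LieAlgebra ℂ g]

/-- The underlying vector space of the full toroidal Lie algebra:
(R ⊗ ġ) ⊕ K ⊕ D, where R ⊗ ġ is modeled as `Idx N →₀ g` (coefficient of t^r)
and D as `Idx N →₀ (Fin (N+1) → ℂ)` (coefficients of t^r d_p). -/
abbrev Carrier := (Idx N →₀ g) × Kmod N × (Idx N →₀ (Fin (N + 1) → ℂ))

/-- A realization of the vector space (R⊗ġ) ⊕ K ⊕ D as a Lie algebra: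
a Lie algebra `G` together with a linear identification with the model. -/
structure Tor where
  G : Type
  [instLieRing : LieRing G]
  [instLieAlgebra : LieAlgebra ℂ G]
  e : G ≃ₗ[ℂ] Carrier N g

attribute [instance] Tor.instLieRing Tor.instLieAlgebra

namespace Tor

variable {N g}
variable (T : Tor N g)

/-- the element t^r ⊗ x of R ⊗ ġ -/
def tg (r : Idx N) (x : g) : T.G := T.e.symm (Finsupp.single r x, 0, 0)

/-- the element t^r k_p of K -/
def k (r : Idx N) (p : Fin (N + 1)) : T.G :=
  T.e.symm (0, Submodule.Quotient.mk (p := dR N) (Finsupp.single r (Pi.single p 1)), 0)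

/-- the element t^r d_p of D -/
def d (r : Idx N) (p : Fin (N + 1)) : T.G :=
  T.e.symm (0, 0, Finsupp.single r (Pi.single p 1))

/-- t^m · d(t^r) = Σ_p r_p t^{r+m} k_p -/
def kSum (r m : Idx N) : T.G := ∑ p : Fin (N + 1), (r p : ℂ) • T.k (r + m) p

/-- The bracket relations of the full toroidal Lie algebra g(μ,ν). -/
structure IsToroidal (B : g →ₗ[ℂ] g →ₗ[ℂ] ℂ) (μ ν : ℂ) : Prop where
  br_gg : ∀ (r m : Idx N) (x y : g),
    ⁅T.tg r x, T.tg m y⁆ = T.tg (r + m) ⁅x, y⁆ + B x y • T.kSum r m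
  br_kg : ∀ (r m : Idx N) (p : Fin (N + 1)) (x : g), ⁅T.k r p, T.tg m x⁆ = 0
  br_kk : ∀ (r m : Idx N) (p q : Fin (N + 1)), ⁅T.k r p, T.k m q⁆ = 0
  br_dg : ∀ (r m : Idx N) (a : Fin (N + 1)) (x : g),
    ⁅T.d r a, T.tg m x⁆ = (m a : ℂ) • T.tg (r + m) x
  br_dk : ∀ (r m : Idx N) (a b : Fin (N + 1)),
    ⁅T.d r a, T.k m b⁆ = (m a : ℂ) • T.k (r + m) b
      + (if a = b then (1 : ℂ) else 0) • T.kSum r m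
  br_dd : ∀ (r m : Idx N) (a b : Fin (N + 1)),
    ⁅T.d r a, T.d m b⁆ = (m a : ℂ) • T.d (r + m) b - (r b : ℂ) • T.d (r + m) a
      + (μ * (m a : ℂ) * (r b : ℂ) + ν * (r a : ℂ) * (m b : ℂ)) •
          (∑ p : Fin (N + 1), (m p : ℂ) • T.k (r + m) p)

end Tor

end

end ToroidalPaper

namespace ToroidalPaper

noncomputable section

open scoped TensorProduct

attribute [local instance 100] LieRing.ofAssociativeRing

/-- the multi-index of t₀^j t^r, r ∈ ℤ^N -/
def mIdx {N : ℕ} (j : ℤ) (r : Fin N → ℤ) : Idx N := Fin.cons j r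

/-- the standard basis vector ε_p of ℤ^N -/
def eps {N : ℕ} (p : Fin N) : Fin N → ℤ := Pi.single p 1

/-- the top T₀ = ℂ[q₁^±,…,q_N^±] -/
def T0c (N : ℕ) : Type := (Fin N → ℤ) →₀ ℂ

instance {N : ℕ} : AddCommGroup (T0c N) :=
  inferInstanceAs (AddCommGroup ((Fin N → ℤ) →₀ ℂ))

instance {N : ℕ} : Module ℂ (T0c N) :=
  inferInstanceAs (Module ℂ ((Fin N → ℤ) →₀ ℂ))

/-- the monomial q^m ∈ T₀ -/
def bq {N : ℕ} (m : Fin N → ℤ) : T0c N :=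
  show ((Fin N → ℤ) →₀ ℂ) from Finsupp.single m 1

namespace Tor

variable {N : ℕ} {g : Type} [LieRing g] [LieAlgebra ℂ g] (T : Tor N g)

/-- t₀^j t^r d̃_p = t₀^j t^r d_p − ν r_p t₀^j t^r k₀ (p = 1,…,N) -/
def dT (ν : ℂ) (j : ℤ) (r : Fin N → ℤ) (p : Fin N) : T.G :=
  T.d (mIdx j r) p.succ - (ν * (r p : ℂ)) • T.k (mIdx j r) 0

/-- t₀^j t^r d̃₀ = −t₀^j t^r d₀ + (μ+ν)(j+1/2) t₀^j t^r k₀ -/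
def dT0 (μ ν : ℂ) (j : ℤ) (r : Fin N → ℤ) : T.G :=
  - T.d (mIdx j r) 0 + ((μ + ν) * ((j : ℂ) + 1 / 2)) • T.k (mIdx j r) 0

/-- the universal enveloping algebra U(g(μ,ν)) -/
abbrev U := UniversalEnvelopingAlgebra ℂ T.G

/-- the canonical embedding g(μ,ν) → U(g(μ,ν)) -/
def uι : T.G →ₗ⁅ℂ⁆ T.U := UniversalEnvelopingAlgebra.ι ℂ

/-- The spanning set of the subalgebra g^(+):  t₀^j t^r k₀ (j ≥ 1);
t₀^j t^r k_p, t₀^j t^r ⊗ g, t₀^j t^r d̃_p (j ≥ 0, 1 ≤ p ≤ N);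
t₀^j t^r d̃₀ (j ≥ -1). -/
def gPlusGen (μ ν : ℂ) : Set T.G :=
  {z | ∃ (j : ℤ) (r : Fin N → ℤ),
    (1 ≤ j ∧ z = T.k (mIdx j r) 0)
    ∨ (∃ p : Fin N, 0 ≤ j ∧ z = T.k (mIdx j r) p.succ)
    ∨ (∃ x : g, 0 ≤ j ∧ z = T.tg (mIdx j r) x)
    ∨ (∃ p : Fin N, 0 ≤ j ∧ z = T.dT ν j r p)
    ∨ (-1 ≤ j ∧ z = T.dT0 μ ν j r)}

/-- V_g = U(g) ⊗_{U(g^(+))} ℂ1, realized as the quotient of U(g) by the left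
ideal generated by g^(+). -/
def Vg (μ ν : ℂ) :=
  T.U ⧸ Submodule.span T.U ((⇑(T.uι)) '' T.gPlusGen μ ν)

instance (μ ν : ℂ) : AddCommGroup (T.Vg μ ν) :=
  inferInstanceAs (AddCommGroup (T.U ⧸ _))

instance (μ ν : ℂ) : Module T.U (T.Vg μ ν) :=
  inferInstanceAs (Module T.U (T.U ⧸ _))

instance (μ ν : ℂ) : Module ℂ (T.Vg μ ν) :=
  inferInstanceAs (Module ℂ (T.U ⧸ _))

instance (μ ν : ℂ) : IsScalarTower ℂ T.U (T.Vg μ ν) :=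
  inferInstanceAs (IsScalarTower ℂ T.U (T.U ⧸ _))

/-- the highest weight vector 1 ∈ V_g -/
def vac (μ ν : ℂ) : T.Vg μ ν := Submodule.Quotient.mk 1

/-- the set S = {k₀1 − c·1, (t^r k₀)(t^m k₀)1 − c (t^{r+m} k₀)1} -/
def Sset (μ ν c : ℂ) : Set (T.Vg μ ν) :=
  {w | w = T.uι (T.k (mIdx 0 0) 0) • T.vac μ ν - c • T.vac μ ν
    ∨ ∃ r m : Fin N → ℤ,
      w = T.uι (T.k (mIdx 0 r) 0) • (T.uι (T.k (mIdx 0 m) 0) • T.vac μ ν)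
        - c • (T.uι (T.k (mIdx 0 (r + m)) 0) • T.vac μ ν)}

/-- the g(μ,ν)-submodule R(S) of V_g generated by S -/
def RS (μ ν c : ℂ) : Submodule T.U (T.Vg μ ν) :=
  Submodule.span T.U (T.Sset μ ν c)

/-- V_g(c) = V_g / R(S) -/
def VgC (μ ν c : ℂ) := T.Vg μ ν ⧸ T.RS μ ν c

instance (μ ν c : ℂ) : AddCommGroup (T.VgC μ ν c) :=
  inferInstanceAs (AddCommGroup (T.Vg μ ν ⧸ _))

instance (μ ν c : ℂ) : Module T.U (T.VgC μ ν c) :=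
  inferInstanceAs (Module T.U (T.Vg μ ν ⧸ _))

instance (μ ν c : ℂ) : Module ℂ (T.VgC μ ν c) :=
  inferInstanceAs (Module ℂ (T.Vg μ ν ⧸ T.RS μ ν c))

instance (μ ν c : ℂ) : IsScalarTower ℂ T.U (T.VgC μ ν c) :=
  inferInstanceAs (IsScalarTower ℂ T.U (T.Vg μ ν ⧸ T.RS μ ν c))

/-- q^m = (1/c) (t^m k₀) 1 ∈ V_g(c) -/
def qm (μ ν c : ℂ) (m : Fin N → ℤ) : T.VgC μ ν c :=
  c⁻¹ • (Submodule.Quotient.mk (T.uι (T.k (mIdx 0 m) 0) • T.vac μ ν))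

/-- The defining relations of the generalized Verma module M(T₀):
for each generator x of the subalgebra g₀ ⊕ g₊ and each basis vector q^m of
T₀ = ℂ[q₁^±,…,q_N^±], the relator (u·x) ⊗ q^m − u ⊗ (x·q^m), where the action
of g₀ on T₀ is (t^m k₀)q^r = c q^{r+m}, (t^m k_p)q^r = 0, (t^m ⊗ g)q^r = 0,
(t^m d₀)q^r = ½(μ+ν)c q^{r+m}, (t^m d_p)q^r = (r_p + νc m_p) q^{r+m}, and g₊
acts trivially. -/
def RelT0 (μ ν c : ℂ) : Set (T.U ⊗[ℂ] T0c N) :=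
  {z | (∃ (u : T.U) (r m' : Fin N → ℤ),
        z = (u * T.uι (T.k (mIdx 0 r) 0)) ⊗ₜ[ℂ] bq m'
          - u ⊗ₜ[ℂ] (c • bq (m' + r)))
    ∨ (∃ (u : T.U) (j : ℤ) (r m' : Fin N → ℤ) (p : Fin (N + 1)), 1 ≤ j ∧
        z = (u * T.uι (T.k (mIdx j r) p)) ⊗ₜ[ℂ] bq m')
    ∨ (∃ (u : T.U) (r m' : Fin N → ℤ) (p : Fin N),
        z = (u * T.uι (T.k (mIdx 0 r) p.succ)) ⊗ₜ[ℂ] bq m')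
    ∨ (∃ (u : T.U) (j : ℤ) (r m' : Fin N → ℤ) (x : g), 0 ≤ j ∧
        z = (u * T.uι (T.tg (mIdx j r) x)) ⊗ₜ[ℂ] bq m')
    ∨ (∃ (u : T.U) (j : ℤ) (r m' : Fin N → ℤ) (p : Fin (N + 1)), 1 ≤ j ∧
        z = (u * T.uι (T.d (mIdx j r) p)) ⊗ₜ[ℂ] bq m')
    ∨ (∃ (u : T.U) (r m' : Fin N → ℤ),
        z = (u * T.uι (T.d (mIdx 0 r) 0)) ⊗ₜ[ℂ] bq m'
          - u ⊗ₜ[ℂ] (((μ + ν) * c / 2) • bq (m' + r)))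
    ∨ (∃ (u : T.U) (r m' : Fin N → ℤ) (s : Fin N),
        z = (u * T.uι (T.d (mIdx 0 r) s.succ)) ⊗ₜ[ℂ] bq m'
          - u ⊗ₜ[ℂ] (((m' s : ℂ) + ν * c * (r s : ℂ)) • bq (m' + r)))}

/-- the generalized Verma module M(T₀) -/
def MT0 (μ ν c : ℂ) := (T.U ⊗[ℂ] T0c N) ⧸ Submodule.span T.U (T.RelT0 μ ν c)

instance (μ ν c : ℂ) : AddCommGroup (T.MT0 μ ν c) :=
  inferInstanceAs (AddCommGroup ((T.U ⊗[ℂ] T0c N) ⧸ _))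

instance (μ ν c : ℂ) : Module T.U (T.MT0 μ ν c) :=
  inferInstanceAs (Module T.U ((T.U ⊗[ℂ] T0c N) ⧸ _))

instance (μ ν c : ℂ) : Module ℂ (T.MT0 μ ν c) :=
  inferInstanceAs
    (Module ℂ ((T.U ⊗[ℂ] T0c N) ⧸ Submodule.span T.U (T.RelT0 μ ν c)))

instance (μ ν c : ℂ) : IsScalarTower ℂ T.U (T.MT0 μ ν c) :=
  inferInstanceAs
    (IsScalarTower ℂ T.U ((T.U ⊗[ℂ] T0c N) ⧸ Submodule.span T.U (T.RelT0 μ ν c)))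

/-- the (unique) maximal proper submodule M^rad of M(T₀), realized as the sum
of all proper submodules -/
def Mrad (μ ν c : ℂ) : Submodule T.U (T.MT0 μ ν c) :=
  sSup {P : Submodule T.U (T.MT0 μ ν c) | P ≠ ⊤}

/-- L(T₀) = M(T₀)/M^rad, the irreducible quotient of M(T₀) -/
def LT0 (μ ν c : ℂ) := T.MT0 μ ν c ⧸ T.Mrad μ ν c

instance (μ ν c : ℂ) : AddCommGroup (T.LT0 μ ν c) :=
  inferInstanceAs (AddCommGroup (T.MT0 μ ν c ⧸ _))

instance (μ ν c : ℂ) : Module T.U (T.LT0 μ ν c) :=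
  inferInstanceAs (Module T.U (T.MT0 μ ν c ⧸ _))

instance (μ ν c : ℂ) : Module ℂ (T.LT0 μ ν c) :=
  inferInstanceAs (Module ℂ (T.MT0 μ ν c ⧸ T.Mrad μ ν c))

instance (μ ν c : ℂ) : IsScalarTower ℂ T.U (T.LT0 μ ν c) :=
  inferInstanceAs (IsScalarTower ℂ T.U (T.MT0 μ ν c ⧸ T.Mrad μ ν c))

/-- the image of q^m ∈ T₀ in L(T₀) -/
def qL (μ ν c : ℂ) (m : Fin N → ℤ) : T.LT0 μ ν c :=
  Submodule.Quotient.mk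
    (Submodule.Quotient.mk ((1 : T.U) ⊗ₜ[ℂ] bq m))

/-- the element E^m_{pa} = (t₀^{-1}t^{ε_p} d̃_a)q^{m−ε_p} − (t₀^{-1}d̃_a)q^m
+ (1/c) δ_{ap} (t₀^{-1}k_p)q^m of L(T₀) -/
def Em (μ ν c : ℂ) (m : Fin N → ℤ) (p a : Fin N) : T.LT0 μ ν c :=
  T.uι (T.dT ν (-1) (eps p) a) • T.qL μ ν c (m - eps p)
    - T.uι (T.dT ν (-1) 0 a) • T.qL μ ν c m
    + (if a = p then c⁻¹ else 0) • (T.uι (T.k (mIdx (-1) 0) p.succ) • T.qL μ ν c m)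

end Tor

end

end ToroidalPaper

namespace ToroidalPaper

noncomputable section

namespace Tor

variable {N : ℕ} {g : Type} [LieRing g] [LieAlgebra ℂ g] (T : Tor N g)

/-- the element E^m_{pa} = (t₀^{-1}t^{ε_p} d̃_a)q^{m−ε_p} − (t₀^{-1}d̃_a)q^m
+ (1/c) δ_{ap} (t₀^{-1}k_p)q^m of V_g(c) -/
def EmV (μ ν c : ℂ) (m : Fin N → ℤ) (p a : Fin N) : T.VgC μ ν c :=
  T.uι (T.dT ν (-1) (eps p) a) • T.qm μ ν c (m - eps p)
    - T.uι (T.dT ν (-1) 0 a) • T.qm μ ν c m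
    + (if a = p then c⁻¹ else 0) • (T.uι (T.k (mIdx (-1) 0) p.succ) • T.qm μ ν c m)

end Tor


namespace Tor

attribute [local instance 100] LieRing.ofAssociativeRing

variable {N : ℕ} {g : Type} [LieRing g] [LieAlgebra ℂ g] (T : Tor N g)

@[simp] lemma mIdx_zero (j : ℤ) (r : Fin N → ℤ) : mIdx j r 0 = j := rfl

@[simp] lemma mIdx_succ (j : ℤ) (r : Fin N → ℤ) (p : Fin N) :
    mIdx j r p.succ = r p := by simp [mIdx]

lemma mIdx_add (j j' : ℤ) (r r' : Fin N → ℤ) :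
    mIdx j r + mIdx j' r' = mIdx (j + j') (r + r') := by
  funext i
  refine Fin.cases ?_ ?_ i <;> simp [mIdx]

section
variable (μ ν c : ℂ)

/-- image of the vacuum in V_g(c) -/
def vC : T.VgC μ ν c := Submodule.Quotient.mk (T.vac μ ν)

lemma smulc (a : ℂ) (u : T.U) (v : T.VgC μ ν c) : u • (a • v) = a • (u • v) := by
  have h1 : a • v = ((a • (1 : T.U)) : T.U) • v := by rw [smul_assoc, one_smul]
  rw [h1, ← mul_smul, mul_smul_comm, mul_one, smul_assoc]

lemma act_comm (X Y : T.G) (v : T.VgC μ ν c) :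
    T.uι X • (T.uι Y • v) = T.uι Y • (T.uι X • v) + T.uι ⁅X, Y⁆ • v := by
  have h : T.uι ⁅X, Y⁆ = T.uι X * T.uι Y - T.uι Y * T.uι X := by
    rw [LieHom.map_lie]; rfl
  rw [h, sub_smul, mul_smul, mul_smul]; abel

lemma act_bracket (X Y : T.G) (v : T.VgC μ ν c) (h : T.uι X • v = 0) :
    T.uι X • (T.uι Y • v) = T.uι ⁅X, Y⁆ • v := by
  rw [act_comm, h, smul_zero, zero_add]

lemma vC_kill {z : T.G} (hz : z ∈ T.gPlusGen μ ν) : T.uι z • T.vC μ ν c = 0 := by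
  have h1 : T.uι z • T.vac μ ν = Submodule.Quotient.mk (T.uι z) := by
    show T.uι z • (Submodule.Quotient.mk 1 : T.Vg μ ν) = _
    rw [← Submodule.Quotient.mk_smul, smul_eq_mul, mul_one]
  have h2 : T.uι z • T.vac μ ν = 0 := by
    rw [h1]
    exact (Submodule.Quotient.mk_eq_zero _).2 <| Submodule.subset_span (Set.mem_image_of_mem _ hz)
  show T.uι z • (Submodule.Quotient.mk (T.vac μ ν) : T.VgC μ ν c) = 0
  rw [← Submodule.Quotient.mk_smul, h2, Submodule.Quotient.mk_zero]

lemma qm_eq (m : Fin N → ℤ) :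
    T.qm μ ν c m = c⁻¹ • (T.uι (T.k (mIdx 0 m) 0) • T.vC μ ν c) := by
  unfold qm vC
  rw [Submodule.Quotient.mk_smul]
  rfl

lemma k0_rel (r m : Fin N → ℤ) :
    T.uι (T.k (mIdx 0 r) 0) • (T.uι (T.k (mIdx 0 m) 0) • T.vC μ ν c)
      = c • (T.uι (T.k (mIdx 0 (r + m)) 0) • T.vC μ ν c) := by
  have hmem : (T.uι (T.k (mIdx 0 r) 0) • (T.uι (T.k (mIdx 0 m) 0) • T.vac μ ν)
      - c • (T.uι (T.k (mIdx 0 (r + m)) 0) • T.vac μ ν)) ∈ T.RS μ ν c :=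
    Submodule.subset_span (Or.inr ⟨r, m, rfl⟩)
  have h0 : (Submodule.Quotient.mk (T.uι (T.k (mIdx 0 r) 0) • (T.uι (T.k (mIdx 0 m) 0) • T.vac μ ν)
      - c • (T.uι (T.k (mIdx 0 (r + m)) 0) • T.vac μ ν)) : T.VgC μ ν c) = 0 :=
    (Submodule.Quotient.mk_eq_zero _).2 hmem
  rw [Submodule.Quotient.mk_sub, sub_eq_zero] at h0
  rw [vC]
  exact h0

lemma kill_vac_k0 {j : ℤ} (hj : 1 ≤ j) (w : Fin N → ℤ) :
    T.uι (T.k (mIdx j w) 0) • T.vC μ ν c = 0 :=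
  T.vC_kill μ ν c ⟨j, w, Or.inl ⟨hj, rfl⟩⟩

lemma kill_vac_ksucc {j : ℤ} (hj : 0 ≤ j) (w : Fin N → ℤ) (p : Fin N) :
    T.uι (T.k (mIdx j w) p.succ) • T.vC μ ν c = 0 :=
  T.vC_kill μ ν c ⟨j, w, Or.inr (Or.inl ⟨p, hj, rfl⟩)⟩

lemma kill_vac_tg {j : ℤ} (hj : 0 ≤ j) (w : Fin N → ℤ) (x : g) :
    T.uι (T.tg (mIdx j w) x) • T.vC μ ν c = 0 :=
  T.vC_kill μ ν c ⟨j, w, Or.inr (Or.inr (Or.inl ⟨x, hj, rfl⟩))⟩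

lemma kill_vac_dT {j : ℤ} (hj : 0 ≤ j) (w : Fin N → ℤ) (p : Fin N) :
    T.uι (T.dT ν j w p) • T.vC μ ν c = 0 :=
  T.vC_kill μ ν c ⟨j, w, Or.inr (Or.inr (Or.inr (Or.inl ⟨p, hj, rfl⟩)))⟩

lemma kill_vac_dT0 {j : ℤ} (hj : -1 ≤ j) (w : Fin N → ℤ) :
    T.uι (T.dT0 μ ν j w) • T.vC μ ν c = 0 :=
  T.vC_kill μ ν c ⟨j, w, Or.inr (Or.inr (Or.inr (Or.inr ⟨hj, rfl⟩)))⟩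

lemma d_zero_eq (j : ℤ) (w : Fin N → ℤ) :
    T.d (mIdx j w) 0
      = -T.dT0 μ ν j w + ((μ + ν) * ((j : ℂ) + 1 / 2)) • T.k (mIdx j w) 0 := by
  rw [dT0]; abel

lemma d_succ_eq (j : ℤ) (w : Fin N → ℤ) (p : Fin N) :
    T.d (mIdx j w) p.succ = T.dT ν j w p + (ν * (w p : ℂ)) • T.k (mIdx j w) 0 := by
  rw [dT]; abel

lemma uι_sum_smul {ι : Type*} (s : Finset ι) (h : ι → T.G) (v : T.VgC μ ν c) :
    T.uι (∑ i ∈ s, h i) • v = ∑ i ∈ s, T.uι (h i) • v := by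
  rw [show T.uι (∑ i ∈ s, h i) = ∑ i ∈ s, T.uι (h i) by
    rw [← LieHom.coe_toLinearMap, map_sum], Finset.sum_smul]

lemma d0_vac (w : Fin N → ℤ) :
    T.uι (T.d (mIdx 0 w) 0) • T.vC μ ν c
      = ((μ + ν) * (1 / 2)) • (T.uι (T.k (mIdx 0 w) 0) • T.vC μ ν c) := by
  rw [T.d_zero_eq μ ν, map_add, map_neg, map_smul,
    add_smul, neg_smul, T.kill_vac_dT0 μ ν c (by norm_num) w, neg_zero, zero_add,
    smul_assoc]
  norm_num

lemma dsucc_vac (w : Fin N → ℤ) (p : Fin N) :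
    T.uι (T.d (mIdx 0 w) p.succ) • T.vC μ ν c
      = (ν * (w p : ℂ)) • (T.uι (T.k (mIdx 0 w) 0) • T.vC μ ν c) := by
  rw [T.d_succ_eq ν, map_add, map_smul, add_smul,
    T.kill_vac_dT μ ν c le_rfl w p, zero_add, smul_assoc]

lemma d1_vac (w : Fin N → ℤ) (β : Fin (N + 1)) :
    T.uι (T.d (mIdx 1 w) β) • T.vC μ ν c = 0 := by
  refine Fin.cases ?_ ?_ β
  · rw [T.d_zero_eq μ ν, map_add, map_neg, map_smul,
      add_smul, neg_smul, T.kill_vac_dT0 μ ν c (by norm_num) w, smul_assoc,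
      T.kill_vac_k0 μ ν c le_rfl w]
    simp
  · intro p
    rw [T.d_succ_eq ν, map_add, map_smul, add_smul,
      T.kill_vac_dT μ ν c (by norm_num) w p, smul_assoc,
      T.kill_vac_k0 μ ν c le_rfl w]
    simp

variable {B : g →ₗ[ℂ] g →ₗ[ℂ] ℂ}

lemma act_qm (z : T.G) (w : Fin N → ℤ) :
    T.uι z • T.qm μ ν c w
      = c⁻¹ • (T.uι (T.k (mIdx 0 w) 0) • (T.uι z • T.vC μ ν c))
        + c⁻¹ • (T.uι ⁅z, T.k (mIdx 0 w) 0⁆ • T.vC μ ν c) := by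
  rw [T.qm_eq, T.smulc, T.act_comm, smul_add]

lemma kSum00_vac (v w : Fin N → ℤ) :
    T.uι (T.kSum (mIdx 0 v) (mIdx 0 w)) • T.vC μ ν c = 0 := by
  rw [kSum, T.uι_sum_smul, Fin.sum_univ_succ]
  simp [map_smul, smul_assoc, mIdx_add,
    T.kill_vac_ksucc μ ν c (le_refl 0)]

lemma kSum1_vac (v w : Fin N → ℤ) :
    T.uι (T.kSum (mIdx 1 v) (mIdx 0 w)) • T.vC μ ν c = 0 := by
  rw [kSum, T.uι_sum_smul, Fin.sum_univ_succ]
  simp [map_smul, smul_assoc, mIdx_add, T.kill_vac_k0 μ ν c (le_refl 1),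
    T.kill_vac_ksucc μ ν c (by norm_num : (0:ℤ) ≤ 1)]

lemma act_k0 (hT : T.IsToroidal B μ ν) (v w : Fin N → ℤ) :
    T.uι (T.k (mIdx 0 v) 0) • T.qm μ ν c w = c • T.qm μ ν c (v + w) := by
  rw [T.act_qm, hT.br_kk, map_zero, zero_smul, smul_zero, add_zero, T.k0_rel,
    show w + v = v + w from add_comm w v, T.qm_eq, smul_smul, smul_smul, mul_comm c⁻¹ c]

lemma act_ksucc (hT : T.IsToroidal B μ ν) (v w : Fin N → ℤ) (p : Fin N) :
    T.uι (T.k (mIdx 0 v) p.succ) • T.qm μ ν c w = 0 := by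
  rw [T.act_qm, hT.br_kk, map_zero, zero_smul, smul_zero, add_zero,
    T.kill_vac_ksucc μ ν c (le_refl 0) v p, smul_zero, smul_zero]

lemma act_tg (hT : T.IsToroidal B μ ν) (v w : Fin N → ℤ) (x : g) :
    T.uι (T.tg (mIdx 0 v) x) • T.qm μ ν c w = 0 := by
  rw [T.act_qm, ← lie_skew, hT.br_kg, neg_zero, map_zero, zero_smul, smul_zero,
    add_zero, T.kill_vac_tg μ ν c (le_refl 0) v x, smul_zero, smul_zero]

lemma act_d0 (hT : T.IsToroidal B μ ν) (v w : Fin N → ℤ) :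
    T.uι (T.d (mIdx 0 v) 0) • T.qm μ ν c w
      = ((μ + ν) * (1 / 2) * c) • T.qm μ ν c (v + w) := by
  have h1 : T.uι ⁅T.d (mIdx 0 v) 0, T.k (mIdx 0 w) 0⁆ • T.vC μ ν c = 0 := by
    rw [hT.br_dk]
    simp only [mIdx_zero, Int.cast_zero, zero_smul, zero_add, if_pos rfl, if_true, one_smul,
      map_add, add_smul]
    exact T.kSum00_vac μ ν c v w
  rw [T.act_qm, h1, smul_zero, add_zero, T.d0_vac μ ν, T.smulc, T.k0_rel,
    show w + v = v + w from add_comm w v, T.qm_eq, smul_smul, smul_smul, smul_smul]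
  congr 1
  ring

lemma act_dsucc (hT : T.IsToroidal B μ ν) (v w : Fin N → ℤ) (p : Fin N) :
    T.uι (T.d (mIdx 0 v) p.succ) • T.qm μ ν c w
      = ((w p : ℂ) + ν * c * (v p : ℂ)) • T.qm μ ν c (v + w) := by
  have h1 : T.uι ⁅T.d (mIdx 0 v) p.succ, T.k (mIdx 0 w) 0⁆ • T.vC μ ν c
      = (w p : ℂ) • (T.uι (T.k (mIdx 0 (v + w)) 0) • T.vC μ ν c) := by
    rw [hT.br_dk, mIdx_add]
    simp [Fin.succ_ne_zero, map_smul, smul_assoc]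
  rw [T.act_qm, h1, T.dsucc_vac μ ν, T.smulc, T.k0_rel,
    show w + v = v + w from add_comm w v, T.qm_eq]
  simp only [smul_smul, ← add_smul]
  congr 1
  ring

lemma kill_k1 (hT : T.IsToroidal B μ ν) (v w : Fin N → ℤ) (β : Fin (N + 1)) :
    T.uι (T.k (mIdx 1 v) β) • T.qm μ ν c w = 0 := by
  have h0 : T.uι (T.k (mIdx 1 v) β) • T.vC μ ν c = 0 := by
    induction β using Fin.cases with
    | zero => exact T.kill_vac_k0 μ ν c (le_refl 1) v
    | succ p => exact T.kill_vac_ksucc μ ν c (by norm_num : (0:ℤ) ≤ 1) v p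
  rw [T.act_qm, h0, smul_zero, smul_zero, zero_add, hT.br_kk, map_zero,
    zero_smul, smul_zero]

lemma kill_tg1 (hT : T.IsToroidal B μ ν) (v w : Fin N → ℤ) (x : g) :
    T.uι (T.tg (mIdx 1 v) x) • T.qm μ ν c w = 0 := by
  rw [T.act_qm, ← lie_skew, hT.br_kg, neg_zero, map_zero, zero_smul, smul_zero,
    add_zero, T.kill_vac_tg μ ν c (by norm_num : (0:ℤ) ≤ 1) v x, smul_zero, smul_zero]

lemma kill_d1 (hT : T.IsToroidal B μ ν) (v w : Fin N → ℤ) (β : Fin (N + 1)) :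
    T.uι (T.d (mIdx 1 v) β) • T.qm μ ν c w = 0 := by
  have hb : T.uι ⁅T.d (mIdx 1 v) β, T.k (mIdx 0 w) 0⁆ • T.vC μ ν c = 0 := by
    rw [hT.br_dk, mIdx_add, map_add, map_smul, map_smul, add_smul,
      smul_assoc, smul_assoc, T.kill_vac_k0 μ ν c (by norm_num : (1:ℤ) ≤ 1 + 0),
      T.kSum1_vac μ ν c v w, smul_zero, smul_zero, add_zero]
  rw [T.act_qm, hb, smul_zero, add_zero, T.d1_vac μ ν c v β, smul_zero, smul_zero]

lemma act_kSum_qm (hT : T.IsToroidal B μ ν) {j j' : ℤ} (hjj' : j + j' = 0)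
    (u v w : Fin N → ℤ) :
    T.uι (T.kSum (mIdx j u) (mIdx j' v)) • T.qm μ ν c w
      = ((j : ℂ) * c) • T.qm μ ν c ((u + v) + w) := by
  rw [kSum, T.uι_sum_smul, Fin.sum_univ_succ]
  simp [map_smul, smul_assoc, mIdx_add, hjj', T.act_k0 μ ν c hT,
    T.act_ksucc μ ν c hT, smul_smul]

lemma act_sum_qm (hT : T.IsToroidal B μ ν) (j' : ℤ) (v u' w : Fin N → ℤ) :
    T.uι (∑ p : Fin (N + 1), ((mIdx j' v) p : ℂ) • T.k (mIdx 0 u') p)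
        • T.qm μ ν c w
      = ((j' : ℂ) * c) • T.qm μ ν c (u' + w) := by
  rw [T.uι_sum_smul, Fin.sum_univ_succ]
  simp [map_smul, smul_assoc, T.act_k0 μ ν c hT,
    T.act_ksucc μ ν c hT, smul_smul]

lemma br_kd (hT : T.IsToroidal B μ ν) (r m : Idx N) (b a : Fin (N + 1)) :
    ⁅T.k m b, T.d r a⁆ = -(((m a : ℂ)) • T.k (r + m) b)
      - (if a = b then (1 : ℂ) else 0) • T.kSum r m := by
  rw [← lie_skew, hT.br_dk, neg_add]
  abel

lemma br_gd (hT : T.IsToroidal B μ ν) (r m : Idx N) (a : Fin (N + 1)) (x : g) :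
    ⁅T.tg m x, T.d r a⁆ = -((m a : ℂ) • T.tg (r + m) x) := by
  rw [← lie_skew, hT.br_dg]

lemma br_gk (hT : T.IsToroidal B μ ν) (r m : Idx N) (p : Fin (N + 1)) (x : g) :
    ⁅T.tg m x, T.k r p⁆ = 0 := by
  rw [← lie_skew, hT.br_kg, neg_zero]

lemma TLA (hT : T.IsToroidal B μ ν) (s r' w : Fin N → ℤ) (a : Fin N) :
    T.uι (T.k (mIdx 1 s) 0) • (T.uι (T.dT ν (-1) r' a) • T.qm μ ν c w)
      = (-(s a : ℂ) * c) • T.qm μ ν c ((s + r') + w) := by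
  rw [T.act_bracket μ ν c _ _ _ (T.kill_k1 μ ν c hT s w 0)]
  have hb : ⁅T.k (mIdx 1 s) 0, T.dT ν (-1) r' a⁆
      = -((s a : ℂ) • T.k (mIdx 0 (r' + s)) 0) := by
    rw [dT, lie_sub, lie_smul, hT.br_kk, smul_zero, sub_zero, T.br_kd μ ν hT, mIdx_add]
    simp [Fin.succ_ne_zero, show (-1 : ℤ) + 1 = 0 by norm_num]
  rw [hb, map_neg, map_smul, neg_smul, smul_assoc, T.act_k0 μ ν c hT,
    show r' + s = s + r' from add_comm r' s, smul_smul]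
  rw [neg_mul, neg_smul]

lemma Mdd0 (hT : T.IsToroidal B μ ν) (s r' w : Fin N → ℤ) (a : Fin N) :
    T.uι ⁅T.d (mIdx 1 s) 0, T.d (mIdx (-1) r') a.succ⁆ • T.qm μ ν c w
      = (-((w a : ℂ) + ν * c * (((s + r') a : ℤ) : ℂ))
          - ((μ + ν) * (1 / 2) * c) * (s a : ℂ)
          + (-(μ * (s a : ℂ)) + ν * (r' a : ℂ)) * (-1 * c))
        • T.qm μ ν c ((s + r') + w) := by
  rw [hT.br_dd, mIdx_add, show (1 : ℤ) + -1 = 0 from by norm_num]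
  simp only [mIdx_zero, mIdx_succ, Int.cast_neg, Int.cast_one,
    map_add, map_sub, map_neg, map_smul,
    add_smul, sub_smul, neg_smul, smul_assoc]
  rw [T.act_dsucc μ ν c hT, T.act_d0 μ ν c hT, T.act_sum_qm μ ν c hT (-1)]
  simp only [smul_smul, ← neg_smul, ← add_smul, ← sub_smul]
  congr 1
  push_cast
  ring

lemma Mddb (hT : T.IsToroidal B μ ν) (s r' w : Fin N → ℤ) (a b : Fin N) :
    T.uι ⁅T.d (mIdx 1 s) b.succ, T.d (mIdx (-1) r') a.succ⁆ • T.qm μ ν c w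
      = ((r' b : ℂ) * ((w a : ℂ) + ν * c * (((s + r') a : ℤ) : ℂ))
          - (s a : ℂ) * ((w b : ℂ) + ν * c * (((s + r') b : ℤ) : ℂ))
          + (μ * (r' b : ℂ) * (s a : ℂ) + ν * (s b : ℂ) * (r' a : ℂ)) * (-1 * c))
        • T.qm μ ν c ((s + r') + w) := by
  rw [hT.br_dd, mIdx_add, show (1 : ℤ) + -1 = 0 from by norm_num]
  simp only [mIdx_zero, mIdx_succ, Int.cast_neg, Int.cast_one,
    map_add, map_sub, map_neg, map_smul,
    add_smul, sub_smul, neg_smul, smul_assoc]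
  rw [T.act_dsucc μ ν c hT, T.act_dsucc μ ν c hT, T.act_sum_qm μ ν c hT (-1)]
  simp only [smul_smul, ← neg_smul, ← add_smul, ← sub_smul]
  congr 1
  push_cast
  ring

lemma Mdk00 (hT : T.IsToroidal B μ ν) (s r' w : Fin N → ℤ) :
    T.uι ⁅T.d (mIdx 1 s) 0, T.k (mIdx (-1) r') 0⁆ • T.qm μ ν c w = 0 := by
  rw [hT.br_dk, mIdx_add, show (1 : ℤ) + -1 = 0 from by norm_num]
  simp only [mIdx_zero, Int.cast_neg, Int.cast_one, if_pos rfl, if_true, one_smul,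
    map_add, map_smul, add_smul, smul_assoc]
  rw [T.act_k0 μ ν c hT, T.act_kSum_qm μ ν c hT (by norm_num : (1:ℤ) + -1 = 0)]
  rw [smul_smul, ← add_smul, show -1 * c + ((1 : ℤ) : ℂ) * c = 0 from by push_cast; ring,
    zero_smul]

lemma Mdk0succ (hT : T.IsToroidal B μ ν) (s u w : Fin N → ℤ) (p : Fin N) :
    T.uι ⁅T.d (mIdx 1 s) 0, T.k (mIdx (-1) u) p.succ⁆ • T.qm μ ν c w = 0 := by
  rw [hT.br_dk, mIdx_add, show (1 : ℤ) + -1 = 0 from by norm_num,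
    if_neg (Ne.symm (Fin.succ_ne_zero p)), zero_smul, add_zero, map_smul,
    smul_assoc, T.act_ksucc μ ν c hT, smul_zero]

lemma Mdksucc0 (hT : T.IsToroidal B μ ν) (s r' w : Fin N → ℤ) (b : Fin N) :
    T.uι ⁅T.d (mIdx 1 s) b.succ, T.k (mIdx (-1) r') 0⁆ • T.qm μ ν c w
      = ((r' b : ℂ) * c) • T.qm μ ν c ((s + r') + w) := by
  rw [hT.br_dk, mIdx_add, show (1 : ℤ) + -1 = 0 from by norm_num,
    if_neg (Fin.succ_ne_zero b), zero_smul, add_zero, map_smul,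
    smul_assoc, T.act_k0 μ ν c hT, mIdx_succ, smul_smul]

lemma Mdksuccsucc (hT : T.IsToroidal B μ ν) (s u w : Fin N → ℤ) (b p : Fin N) :
    T.uι ⁅T.d (mIdx 1 s) b.succ, T.k (mIdx (-1) u) p.succ⁆ • T.qm μ ν c w
      = (if b = p then c else 0) • T.qm μ ν c ((s + u) + w) := by
  rw [hT.br_dk, mIdx_add, show (1 : ℤ) + -1 = 0 from by norm_num, map_add,
    map_smul, map_smul, add_smul, smul_assoc, smul_assoc,
    T.act_ksucc μ ν c hT, smul_zero, zero_add,
    T.act_kSum_qm μ ν c hT (by norm_num : (1:ℤ) + -1 = 0)]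
  by_cases hbp : b = p <;> simp [Fin.succ_inj, hbp]

lemma Mkd0 (hT : T.IsToroidal B μ ν) (s r' w : Fin N → ℤ) (a : Fin N) :
    T.uι ⁅T.k (mIdx 1 s) 0, T.d (mIdx (-1) r') a.succ⁆ • T.qm μ ν c w
      = (-(s a : ℂ) * c) • T.qm μ ν c ((s + r') + w) := by
  rw [T.br_kd μ ν hT, mIdx_add, show (-1 : ℤ) + 1 = 0 from by norm_num,
    if_neg (Fin.succ_ne_zero a), zero_smul, sub_zero, map_neg, map_smul,
    neg_smul, smul_assoc, T.act_k0 μ ν c hT, mIdx_succ,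
    show r' + s = s + r' from add_comm r' s, smul_smul, ← neg_smul, neg_mul]

lemma Mkdsucc (hT : T.IsToroidal B μ ν) (s r' w : Fin N → ℤ) (a b : Fin N) :
    T.uι ⁅T.k (mIdx 1 s) b.succ, T.d (mIdx (-1) r') a.succ⁆ • T.qm μ ν c w
      = (if a = b then c else 0) • T.qm μ ν c ((s + r') + w) := by
  rw [T.br_kd μ ν hT, mIdx_add, show (-1 : ℤ) + 1 = 0 from by norm_num,
    map_sub, map_neg, map_smul, map_smul, sub_smul, neg_smul,
    smul_assoc, smul_assoc, T.act_ksucc μ ν c hT, smul_zero, neg_zero, zero_sub,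
    T.act_kSum_qm μ ν c hT (by norm_num : (-1:ℤ) + 1 = 0),
    show r' + s = s + r' from add_comm r' s]
  by_cases hab : a = b <;> simp [Fin.succ_inj, hab]

lemma kill_dT0_1 (hT : T.IsToroidal B μ ν) (v w : Fin N → ℤ) :
    T.uι (T.dT0 μ ν 1 v) • T.qm μ ν c w = 0 := by
  rw [dT0, map_add, map_neg, map_smul, add_smul, neg_smul,
    smul_assoc, T.kill_d1 μ ν c hT v w 0, T.kill_k1 μ ν c hT v w 0, smul_zero,
    neg_zero, add_zero]

lemma kill_dT1 (hT : T.IsToroidal B μ ν) (v w : Fin N → ℤ) (b : Fin N) :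
    T.uι (T.dT ν 1 v b) • T.qm μ ν c w = 0 := by
  rw [dT, map_sub, map_smul, sub_smul, smul_assoc,
    T.kill_d1 μ ν c hT v w b.succ, T.kill_k1 μ ν c hT v w 0, smul_zero, sub_zero]

lemma TLK (hT : T.IsToroidal B μ ν) (s u w : Fin N → ℤ) (β γ : Fin (N + 1)) :
    T.uι (T.k (mIdx 1 s) β) • (T.uι (T.k (mIdx (-1) u) γ) • T.qm μ ν c w) = 0 := by
  rw [T.act_bracket μ ν c _ _ _ (T.kill_k1 μ ν c hT s w β), hT.br_kk,
    map_zero, zero_smul]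

lemma TLB (hT : T.IsToroidal B μ ν) (s r' w : Fin N → ℤ) (a b : Fin N) :
    T.uι (T.k (mIdx 1 s) b.succ) • (T.uι (T.dT ν (-1) r' a) • T.qm μ ν c w)
      = (if a = b then c else 0) • T.qm μ ν c ((s + r') + w) := by
  rw [T.act_bracket μ ν c _ _ _ (T.kill_k1 μ ν c hT s w b.succ), dT, lie_sub, lie_smul,
    hT.br_kk, smul_zero, sub_zero, T.Mkdsucc μ ν c hT]

lemma TLC (hT : T.IsToroidal B μ ν) (s r' w : Fin N → ℤ) (x : g) (a : Fin N) :
    T.uι (T.tg (mIdx 1 s) x) • (T.uι (T.dT ν (-1) r' a) • T.qm μ ν c w) = 0 := by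
  rw [T.act_bracket μ ν c _ _ _ (T.kill_tg1 μ ν c hT s w x), dT, lie_sub, lie_smul,
    T.br_gk μ ν hT, smul_zero, sub_zero, T.br_gd μ ν hT, mIdx_add,
    show (-1 : ℤ) + 1 = 0 from by norm_num, map_neg, map_smul, neg_smul,
    smul_assoc, T.act_tg μ ν c hT, smul_zero, neg_zero]

lemma TLCk (hT : T.IsToroidal B μ ν) (s u w : Fin N → ℤ) (x : g) (γ : Fin (N + 1)) :
    T.uι (T.tg (mIdx 1 s) x) • (T.uι (T.k (mIdx (-1) u) γ) • T.qm μ ν c w) = 0 := by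
  rw [T.act_bracket μ ν c _ _ _ (T.kill_tg1 μ ν c hT s w x), T.br_gk μ ν hT,
    map_zero, zero_smul]

lemma TLD (hT : T.IsToroidal B μ ν) (s r' w : Fin N → ℤ) (a : Fin N) :
    T.uι (T.dT0 μ ν 1 s) • (T.uι (T.dT ν (-1) r' a) • T.qm μ ν c w)
      = ((w a : ℂ) + 2 * ν * c * (r' a : ℂ) - 2 * μ * c * (s a : ℂ))
          • T.qm μ ν c ((s + r') + w) := by
  rw [T.act_bracket μ ν c _ _ _ (T.kill_dT0_1 μ ν c hT s w), dT0, dT]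
  simp only [add_lie, neg_lie, smul_lie, lie_sub, lie_smul, hT.br_kk, smul_zero,
    sub_zero, map_add, map_sub, map_neg, map_smul,
    add_smul, sub_smul, neg_smul, smul_assoc]
  rw [T.Mdd0 μ ν c hT, T.Mdk00 μ ν c hT, T.Mkd0 μ ν c hT]
  simp only [map_zero, zero_smul, smul_zero, neg_zero, zero_add, add_zero,
    sub_zero, smul_smul, ← neg_smul, ← add_smul, ← sub_smul]
  congr 1
  push_cast [Pi.add_apply]
  ring

lemma TLD2 (hT : T.IsToroidal B μ ν) (s u w : Fin N → ℤ) (p : Fin N) :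
    T.uι (T.dT0 μ ν 1 s) • (T.uι (T.k (mIdx (-1) u) p.succ) • T.qm μ ν c w) = 0 := by
  rw [T.act_bracket μ ν c _ _ _ (T.kill_dT0_1 μ ν c hT s w), dT0]
  simp only [add_lie, neg_lie, smul_lie, hT.br_kk, smul_zero, add_zero,
    map_neg, neg_smul]
  rw [T.Mdk0succ μ ν c hT, neg_zero]

lemma TLE (hT : T.IsToroidal B μ ν) (s r' w : Fin N → ℤ) (a b : Fin N) :
    T.uι (T.dT ν 1 s b) • (T.uι (T.dT ν (-1) r' a) • T.qm μ ν c w)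
      = ((r' b : ℂ) * (w a : ℂ) - (s a : ℂ) * (w b : ℂ)
          - μ * c * (r' b : ℂ) * (s a : ℂ) - ν * c * (s b : ℂ) * (r' a : ℂ))
          • T.qm μ ν c ((s + r') + w) := by
  rw [T.act_bracket μ ν c _ _ _ (T.kill_dT1 μ ν c hT s w b), dT, dT]
  simp only [sub_lie, lie_sub, smul_lie, lie_smul, hT.br_kk, smul_zero,
    sub_zero, map_add, map_sub, map_neg, map_smul,
    add_smul, sub_smul, neg_smul, smul_assoc]
  rw [T.Mddb μ ν c hT, T.Mdksucc0 μ ν c hT, T.Mkd0 μ ν c hT]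
  simp only [map_zero, zero_smul, smul_zero, neg_zero, zero_add, add_zero,
    sub_zero, smul_smul, ← neg_smul, ← add_smul, ← sub_smul]
  congr 1
  push_cast [Pi.add_apply]
  ring

lemma TLE2 (hT : T.IsToroidal B μ ν) (s u w : Fin N → ℤ) (b p : Fin N) :
    T.uι (T.dT ν 1 s b) • (T.uι (T.k (mIdx (-1) u) p.succ) • T.qm μ ν c w)
      = (if b = p then c else 0) • T.qm μ ν c ((s + u) + w) := by
  rw [T.act_bracket μ ν c _ _ _ (T.kill_dT1 μ ν c hT s w b), dT, sub_lie, smul_lie,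
    hT.br_kk, smul_zero, sub_zero, T.Mdksuccsucc μ ν c hT]

end

end Tor

/-- (4.49)-(4.51): identities in V_g(c). -/
theorem statement15 (N : ℕ) (hN : 1 ≤ N) (g : Type) [LieRing g] [LieAlgebra ℂ g]
    [FiniteDimensional ℂ g] [LieAlgebra.IsSimple ℂ g]
    (B : g →ₗ[ℂ] g →ₗ[ℂ] ℂ)
    (hBsymm : ∀ x y : g, B x y = B y x)
    (hBnondeg : ∀ x : g, (∀ y : g, B x y = 0) → x = 0)
    (hBinv : ∀ x y z : g, B ⁅x, y⁆ z = B x ⁅y, z⁆)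
    (μ ν : ℂ) (T : Tor N g) (hT : T.IsToroidal B μ ν)
    (c : ℂ) (hc : c ≠ 0) (m r s : Fin N → ℤ) (gx : g) (a b : Fin N) :
    -- (t₀t^s k₀)·Σ_p r_p E^m_{pa} = 0
    T.uι (T.k (mIdx 1 s) 0) • (∑ p : Fin N, (r p : ℂ) • T.EmV μ ν c m p a) = 0 ∧
    -- (t₀t^s k_b)·Σ_p r_p E^m_{pa} = 0
    T.uι (T.k (mIdx 1 s) b.succ) • (∑ p : Fin N, (r p : ℂ) • T.EmV μ ν c m p a) = 0 ∧
    -- (t₀t^s⊗g)·Σ_p r_p E^m_{pa} = 0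
    T.uι (T.tg (mIdx 1 s) gx) • (∑ p : Fin N, (r p : ℂ) • T.EmV μ ν c m p a) = 0 ∧
    -- (t₀t^s d̃₀)·Σ_p r_p E^m_{pa} = r_a(−1 + 2νc) q^{m+s}
    T.uι (T.dT0 μ ν 1 s) • (∑ p : Fin N, (r p : ℂ) • T.EmV μ ν c m p a) =
      ((r a : ℂ) * (-1 + 2 * ν * c)) • T.qm μ ν c (m + s) ∧
    -- (t₀t^s d̃_b)·Σ_p r_p E^m_{pa}
    --   = (r_b m_a + (1 − μc) s_a r_b − νc r_a s_b) q^{m+s}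
    T.uι (T.dT ν 1 s b) • (∑ p : Fin N, (r p : ℂ) • T.EmV μ ν c m p a) =
      ((r b : ℂ) * (m a : ℂ) + (1 - μ * c) * (s a : ℂ) * (r b : ℂ)
          - ν * c * (r a : ℂ) * (s b : ℂ)) • T.qm μ ν c (m + s) := by
  refine ⟨?_, ?_, ?_, ?_, ?_⟩
  · rw [Finset.smul_sum]
    refine Finset.sum_eq_zero fun p _ => ?_
    rw [T.smulc μ ν c, Tor.EmV, smul_add, smul_sub, T.smulc μ ν c,
      T.TLA μ ν c hT s (eps p) (m - eps p) a, T.TLA μ ν c hT s 0 m a,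
      T.TLK μ ν c hT s 0 m 0 p.succ, smul_zero, add_zero,
      show (s + eps p) + (m - eps p) = (s + 0) + m from by abel, sub_self, smul_zero]
  · rw [Finset.smul_sum]
    refine Finset.sum_eq_zero fun p _ => ?_
    rw [T.smulc μ ν c, Tor.EmV, smul_add, smul_sub, T.smulc μ ν c,
      T.TLB μ ν c hT s (eps p) (m - eps p) a b, T.TLB μ ν c hT s 0 m a b,
      T.TLK μ ν c hT s 0 m b.succ p.succ, smul_zero, add_zero,
      show (s + eps p) + (m - eps p) = (s + 0) + m from by abel, sub_self, smul_zero]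
  · rw [Finset.smul_sum]
    refine Finset.sum_eq_zero fun p _ => ?_
    rw [T.smulc μ ν c, Tor.EmV, smul_add, smul_sub, T.smulc μ ν c,
      T.TLC μ ν c hT s (eps p) (m - eps p) gx a, T.TLC μ ν c hT s 0 m gx a,
      T.TLCk μ ν c hT s 0 m gx p.succ, smul_zero, add_zero, sub_self, smul_zero]
  · rw [Finset.smul_sum]
    have hE : ∀ p : Fin N, T.uι (T.dT0 μ ν 1 s) • ((r p : ℂ) • T.EmV μ ν c m p a)
        = ((r p : ℂ) * (if p = a then (-1 + 2 * ν * c) else 0)) • T.qm μ ν c (m + s) := by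
      intro p
      rw [T.smulc μ ν c, Tor.EmV, smul_add, smul_sub, T.smulc μ ν c,
        T.TLD μ ν c hT s (eps p) (m - eps p) a, T.TLD μ ν c hT s 0 m a,
        T.TLD2 μ ν c hT s 0 m p, smul_zero, add_zero,
        show (s + eps p) + (m - eps p) = m + s from by abel,
        show (s + 0) + m = m + s from by abel,
        ← sub_smul, smul_smul]
      congr 1
      by_cases hap : a = p
      · subst hap
        simp only [eps, Pi.sub_apply, Pi.zero_apply, Pi.single_eq_same, if_pos rfl]
        push_cast
        ring
      · simp only [eps, Pi.sub_apply, Pi.zero_apply, Pi.single_apply, if_neg hap,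
          if_neg (Ne.symm hap)]
        push_cast
        ring
    rw [Finset.sum_congr rfl fun p _ => hE p, ← Finset.sum_smul]
    congr 1
    simp [mul_ite, mul_zero, Finset.sum_ite_eq']
  · rw [Finset.smul_sum]
    have hE : ∀ p : Fin N, T.uι (T.dT ν 1 s b) • ((r p : ℂ) • T.EmV μ ν c m p a)
        = ((r p : ℂ) * ((if b = p then ((m a : ℂ) + (1 - μ * c) * (s a : ℂ)) else 0)
            - (if a = p then ν * c * (s b : ℂ) else 0))) • T.qm μ ν c (m + s) := by
      intro p
      rw [T.smulc μ ν c, Tor.EmV, smul_add, smul_sub, T.smulc μ ν c,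
        T.TLE μ ν c hT s (eps p) (m - eps p) a b, T.TLE μ ν c hT s 0 m a b,
        T.TLE2 μ ν c hT s 0 m b p,
        show (s + eps p) + (m - eps p) = m + s from by abel,
        show (s + 0) + m = m + s from by abel,
        smul_smul, ← sub_smul, ← add_smul, smul_smul]
      congr 1
      simp only [eps, Pi.sub_apply, Pi.zero_apply, Pi.single_apply]
      split_ifs <;> push_cast <;> (try simp only [inv_mul_cancel₀ hc]) <;> ring
    rw [Finset.sum_congr rfl fun p _ => hE p, ← Finset.sum_smul]
    congr 1
    simp only [mul_sub, mul_ite, mul_zero, Finset.sum_sub_distrib,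
      Finset.sum_ite_eq, Finset.mem_univ, if_true]
    ring

end

end ToroidalPaper
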